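/- Let I be a finite index set, and for each i ∈ I let d_i ∈ ℝ, v_i ∈ ℝ^n, and r_i ≥ 0. The following are equivalent: (1) there exists a symmetric family of reals (y_ij)_{i,j∈I} with y_ii = d_i such that for all i, j ∈ I, d_i + d_j + 2 y_ij ≥ ‖v_i + v_j‖₂² and d_i + d_j − 2 y_ij ≥ ‖v_i − v_j‖₂², and for all i ≠ j, d_i + d_j − 2 y_ij ≥ (r_i + r_j)²; (2) for all i ∈ I, d_i ≥ ‖v_i‖₂², and for all i ≠ j in I, 2(d_i + d_j) ≥ (r_i + r_j)² + ‖v_i + v_j‖₂². (This justifies omitting the off-diagonal lifted variables in the parabolic relaxation.) -/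
import Mathlib


/-- The squared Euclidean norm `‖v‖₂²` of a vector `v ∈ ℝⁿ`. -/
def sqnorm {n : ℕ} (v : Fin n → ℝ) : ℝ :=
  ∑ k, (v k) ^ 2

lemma sqnorm_add_self {n : ℕ} (v : Fin n → ℝ) : sqnorm (v + v) = 4 * sqnorm v := by
  simp only [sqnorm, Finset.mul_sum]
  exact Finset.sum_congr rfl fun k _ => by simp [Pi.add_apply]; ring

lemma sqnorm_sub_self {n : ℕ} (v : Fin n → ℝ) : sqnorm (v - v) = 0 := by
  simp [sqnorm]

lemma sqnorm_sub_comm {n : ℕ} (v w : Fin n → ℝ) : sqnorm (v - w) = sqnorm (w - v) := by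
  unfold sqnorm
  exact Finset.sum_congr rfl fun k _ => by simp [Pi.sub_apply]; ring

lemma sqnorm_parallelogram {n : ℕ} (v w : Fin n → ℝ) :
    sqnorm (v + w) + sqnorm (v - w) = 2 * (sqnorm v + sqnorm w) := by
  unfold sqnorm
  rw [← Finset.sum_add_distrib, mul_add, Finset.mul_sum, Finset.mul_sum,
    ← Finset.sum_add_distrib]
  exact Finset.sum_congr rfl fun k _ => by simp [Pi.add_apply, Pi.sub_apply]; ring

/-- Let `I` be a finite index set and, for each `i ∈ I`, let
`dᵢ ∈ ℝ`, `vᵢ ∈ ℝⁿ` and `rᵢ ≥ 0`. The following are equivalent: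
(1) there exists a symmetric family of reals `(yᵢⱼ)` with `yᵢᵢ = dᵢ` such that
for all `i, j`: `dᵢ + dⱼ + 2yᵢⱼ ≥ ‖vᵢ + vⱼ‖₂²` and `dᵢ + dⱼ − 2yᵢⱼ ≥ ‖vᵢ − vⱼ‖₂²`,
and for all `i ≠ j`: `dᵢ + dⱼ − 2yᵢⱼ ≥ (rᵢ + rⱼ)²`;
(2) for all `i`: `dᵢ ≥ ‖vᵢ‖₂²`, and for all `i ≠ j`:
`2(dᵢ + dⱼ) ≥ (rᵢ + rⱼ)² + ‖vᵢ + vⱼ‖₂²`. -/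
theorem offdiagonal_elimination_family {I : Type*} [Fintype I] {n : ℕ}
    (d : I → ℝ) (v : I → Fin n → ℝ) (r : I → ℝ) (hr : ∀ i, 0 ≤ r i) :
    (∃ y : I → I → ℝ,
        (∀ i j : I, y i j = y j i) ∧
        (∀ i : I, y i i = d i) ∧
        (∀ i j : I, sqnorm (v i + v j) ≤ d i + d j + 2 * y i j) ∧
        (∀ i j : I, sqnorm (v i - v j) ≤ d i + d j - 2 * y i j) ∧
        (∀ i j : I, i ≠ j → (r i + r j) ^ 2 ≤ d i + d j - 2 * y i j)) ↔
    ((∀ i : I, sqnorm (v i) ≤ d i) ∧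
     (∀ i j : I, i ≠ j →
        (r i + r j) ^ 2 + sqnorm (v i + v j) ≤ 2 * (d i + d j))) := by
  classical
  constructor
  · rintro ⟨y, hsym, hdiag, hplus, hminus, hrr⟩
    constructor
    · intro i
      have h := hplus i i
      rw [hdiag, sqnorm_add_self] at h
      linarith
    · intro i j hij
      have h1 := hplus i j
      have h2 := hrr i j hij
      linarith
  · rintro ⟨h1, h2⟩
    refine ⟨fun i j => if i = j then d i else
        (d i + d j - max ((r i + r j) ^ 2) (sqnorm (v i - v j))) / 2, ?_, ?_, ?_, ?_, ?_⟩
    · intro i j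
      by_cases h : i = j
      · subst h; simp
      · simp only [if_neg h, if_neg (Ne.symm h)]
        rw [sqnorm_sub_comm]
        ring_nf
    · intro i; simp
    · intro i j
      by_cases h : i = j
      · subst h
        simp only []; rw [if_true, sqnorm_add_self]
        have := h1 i
        linarith
      · simp only [if_neg h]
        have hpar := sqnorm_parallelogram (v i) (v j)
        have hi := h1 i
        have hj := h1 j
        have h2' := h2 i j h
        have hmax : max ((r i + r j) ^ 2) (sqnorm (v i - v j)) + sqnorm (v i + v j)
            ≤ 2 * (d i + d j) := by
          rcases max_cases ((r i + r j) ^ 2) (sqnorm (v i - v j)) with ⟨he, _⟩ | ⟨he, _⟩ <;>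
            rw [he] <;> linarith
        linarith
    · intro i j
      by_cases h : i = j
      · subst h
        simp only []; rw [if_true, sqnorm_sub_self]
        linarith
      · simp only [if_neg h]
        have := le_max_right ((r i + r j) ^ 2) (sqnorm (v i - v j))
        linarith
    · intro i j hij
      simp only [if_neg hij]
      have := le_max_left ((r i + r j) ^ 2) (sqnorm (v i - v j))
      linarith
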